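/- arXiv:quant-ph/0611289 — 2 statements merged into one kernel-verified Lean document; each statement's English description precedes it below -/
import Mathlib

section
/- Let ρ and σ be density operators on a finite-dimensional complex Hilbert space. The function Ψ(a) := max_{s ∈ ℝ} (a·s − φ(s+1)), where φ(s) := log Tr[ρ^{1−s}σ^{s}], satisfies Ψ(a) = Φ(a) − a for all a in [−D(ρ‖σ), D(σ‖ρ)], where Φ(a) := max_{s ∈ ℝ} (a·s − φ(s)); moreover Ψ is continuous and monotonically decreasing on this interval with Ψ(−D(ρ‖σ)) = D(ρ‖σ) and Ψ(D(σ‖ρ)) = 0. -/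
/-!
Diagonalizing `ρ = ∑ pₖ |uₖ⟩⟨uₖ|` and `σ = ∑ qₗ |vₗ⟩⟨vₗ|` turns every trace `Tr[f(ρ) g(σ)]` into
the classical sum `∑ |⟨uₖ, vₗ⟩|² f(pₖ) g(qₗ)` (Nussbaum–Szkoła). Hence `φ(0) = φ(1) = 0`, and
Jensen's inequality for `exp` gives the two tangent lines `φ(s) ≥ -s D(ρ‖σ)` and
`φ(s) ≥ (s - 1) D(σ‖ρ)`. Only these four facts about `φ` are used afterwards: for `a` in
`[-D(ρ‖σ), D(σ‖ρ)]` they bound `a s - φ(s)` above, so shifting `s` by one gives `Ψ(a) = Φ(a) - a`;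
they make `Φ` nondecreasing and `Φ(a) - a` nonincreasing, so `Ψ` is `1`-Lipschitz; and they pin
down the values at the endpoints.
-/

open scoped Matrix ComplexOrder
open Filter

noncomputable section

/-- Real power of a matrix, taken via the spectral decomposition when the matrix is
Hermitian (with the convention `0 ^ t` given by `Real.rpow`), and `0` otherwise. -/
def mpow {n : Type*} [Fintype n] [DecidableEq n] (A : Matrix n n ℂ) (t : ℝ) : Matrix n n ℂ :=
  if h : A.IsHermitian then
    (Matrix.IsHermitian.eigenvectorUnitary h : Matrix n n ℂ) *
      Matrix.diagonal (fun i => ((h.eigenvalues i ^ t : ℝ) : ℂ)) *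
      (star (Matrix.IsHermitian.eigenvectorUnitary h : Matrix n n ℂ))
  else 0

/-- Logarithm of a matrix via the spectral decomposition (Hermitian case), `0` otherwise. -/
def mlog {n : Type*} [Fintype n] [DecidableEq n] (A : Matrix n n ℂ) : Matrix n n ℂ :=
  if h : A.IsHermitian then
    (Matrix.IsHermitian.eigenvectorUnitary h : Matrix n n ℂ) *
      Matrix.diagonal (fun i => ((Real.log (h.eigenvalues i) : ℝ) : ℂ)) *
      (star (Matrix.IsHermitian.eigenvectorUnitary h : Matrix n n ℂ))
  else 0

/-- Exponential of a matrix via the spectral decomposition (Hermitian case), `0` otherwise. -/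
def mexp {n : Type*} [Fintype n] [DecidableEq n] (A : Matrix n n ℂ) : Matrix n n ℂ :=
  if h : A.IsHermitian then
    (Matrix.IsHermitian.eigenvectorUnitary h : Matrix n n ℂ) *
      Matrix.diagonal (fun i => ((Real.exp (h.eigenvalues i) : ℝ) : ℂ)) *
      (star (Matrix.IsHermitian.eigenvectorUnitary h : Matrix n n ℂ))
  else 0

/-- The orthogonal projection onto the span of the eigenvectors of a Hermitian matrix
corresponding to positive eigenvalues, denoted `{A > 0}` in the paper; `0` otherwise. -/
def posProj {n : Type*} [Fintype n] [DecidableEq n] (A : Matrix n n ℂ) : Matrix n n ℂ :=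
  if h : A.IsHermitian then
    (Matrix.IsHermitian.eigenvectorUnitary h : Matrix n n ℂ) *
      Matrix.diagonal (fun i => if 0 < h.eigenvalues i then (1 : ℂ) else 0) *
      (star (Matrix.IsHermitian.eigenvectorUnitary h : Matrix n n ℂ))
  else 0

/-- The `n`-fold tensor (Kronecker) power `ρ^{⊗n}`, as a matrix indexed by `Fin n → Fin d`. -/
def tensorPow {d : ℕ} (ρ : Matrix (Fin d) (Fin d) ℂ) (n : ℕ) :
    Matrix (Fin n → Fin d) (Fin n → Fin d) ℂ :=
  fun v w => ∏ t, ρ (v t) (w t)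

/-- Quantum relative entropy `D(ρ‖σ) = Tr[ρ(log ρ − log σ)]`. -/
def qRelEnt {d : ℕ} (ρ σ : Matrix (Fin d) (Fin d) ℂ) : ℝ :=
  ((ρ * (mlog ρ - mlog σ)).trace).re

/-- `φ(s | ρ‖σ) = log Tr[ρ^{1−s} σ^{s}]`. -/
def qphi {d : ℕ} (ρ σ : Matrix (Fin d) (Fin d) ℂ) (s : ℝ) : ℝ :=
  Real.log (((mpow ρ (1 - s)) * (mpow σ s)).trace.re)

namespace Matrix.IsHermitian

variable {n : Type*} [Fintype n] [DecidableEq n] {A B : Matrix n n ℂ}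

theorem mpow_eq_cfc (hA : A.IsHermitian) (t : ℝ) : mpow A t = cfc (fun x : ℝ => x ^ t) A := by
  rw [mpow, dif_pos hA, cfc_eq hA, IsHermitian.cfc, Unitary.conjStarAlgAut_apply]
  rfl

theorem mlog_eq_cfc (hA : A.IsHermitian) : mlog A = cfc Real.log A := by
  rw [mlog, dif_pos hA, cfc_eq hA, IsHermitian.cfc, Unitary.conjStarAlgAut_apply]
  rfl

/-- The Nussbaum–Szkoła weights `|⟨uₖ, vₗ⟩|²` between the eigenbases of `A` and `B`. -/
def eigenOverlap (hA : A.IsHermitian) (hB : B.IsHermitian) (x : n × n) : ℝ :=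
  Complex.normSq ((star (hA.eigenvectorUnitary : Matrix n n ℂ) * hB.eigenvectorUnitary) x.1 x.2)

theorem eigenOverlap_nonneg (hA : A.IsHermitian) (hB : B.IsHermitian) (x : n × n) :
    0 ≤ hA.eigenOverlap hB x :=
  Complex.normSq_nonneg _

theorem trace_cfc_mul_cfc (hA : A.IsHermitian) (hB : B.IsHermitian) (f g : ℝ → ℝ) :
    (cfc f A * cfc g B).trace =
      ((∑ x, hA.eigenOverlap hB x * f (hA.eigenvalues x.1) * g (hB.eigenvalues x.2) : ℝ) : ℂ) := by
  rw [cfc_eq hA, cfc_eq hB, IsHermitian.cfc, IsHermitian.cfc, Unitary.conjStarAlgAut_apply,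
    Unitary.conjStarAlgAut_apply]
  set U := (hA.eigenvectorUnitary : Matrix n n ℂ)
  set V := (hB.eigenvectorUnitary : Matrix n n ℂ)
  set W := star U * V with hW
  set F : Matrix n n ℂ := diagonal (RCLike.ofReal ∘ f ∘ hA.eigenvalues)
  set G : Matrix n n ℂ := diagonal (RCLike.ofReal ∘ g ∘ hB.eigenvalues)
  have hVU : star V * U = star W := by rw [hW, star_mul, star_star]
  have hFWG : ∀ k l, (F * W * G) k l = f (hA.eigenvalues k) * W k l * g (hB.eigenvalues l) := by
    intro k l
    simp [F, G, mul_diagonal, diagonal_mul]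
  calc _ = (F * W * G * star W).trace := by
        rw [← hVU, hW]
        simp only [Matrix.mul_assoc]
        rw [trace_mul_comm]
        simp only [Matrix.mul_assoc]
    _ = _ := by
      simp only [trace, diag_apply, mul_apply (N := star W), hFWG, star_apply,
        Fintype.sum_prod_type, eigenOverlap]
      push_cast
      refine Finset.sum_congr rfl fun k _ => Finset.sum_congr rfl fun l _ => ?_
      rw [Complex.normSq_eq_conj_mul_self, RCLike.star_def]
      ring

theorem sum_eigenOverlap_mul_eigenvalues_left (hA : A.IsHermitian) (hB : B.IsHermitian) :
    ∑ x, hA.eigenOverlap hB x * hA.eigenvalues x.1 = A.trace.re := by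
  have h := hA.trace_cfc_mul_cfc hB (fun x => x) (fun _ => 1)
  rw [cfc_id' ℝ A hA.isSelfAdjoint, cfc_const_one ℝ B hB.isSelfAdjoint, Matrix.mul_one] at h
  simp [h]

theorem sum_eigenOverlap_mul_eigenvalues_right (hA : A.IsHermitian) (hB : B.IsHermitian) :
    ∑ x, hA.eigenOverlap hB x * hB.eigenvalues x.2 = B.trace.re := by
  have h := hA.trace_cfc_mul_cfc hB (fun _ => 1) (fun x => x)
  rw [cfc_id' ℝ B hB.isSelfAdjoint, cfc_const_one ℝ A hA.isSelfAdjoint, Matrix.one_mul] at h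
  simp [h]

end Matrix.IsHermitian

open Matrix.IsHermitian

theorem neg_sum_mul_le_log_sum_rpow {ι : Type*} [Fintype ι] {w a b : ι → ℝ}
    (hw : ∀ i, 0 ≤ w i) (ha : ∀ i, 0 < a i) (hb : ∀ i, 0 < b i) (h1 : ∑ i, w i * a i = 1)
    (s : ℝ) :
    -(∑ i, w i * a i * (Real.log (a i) - Real.log (b i))) * s ≤
      Real.log (∑ i, w i * a i ^ (1 - s) * b i ^ s) := by
  have hterm : ∀ i, w i * a i ^ (1 - s) * b i ^ s =
      w i * a i * Real.exp (s * (Real.log (b i) - Real.log (a i))) := by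
    intro i
    rw [Real.rpow_def_of_pos (ha i), Real.rpow_def_of_pos (hb i), mul_assoc, ← Real.exp_add,
      mul_assoc, ← Real.exp_log (ha i), ← Real.exp_add, Real.log_exp]
    ring_nf
  have hjensen := convexOn_exp.map_sum_le (t := Finset.univ) (w := fun i => w i * a i)
    (p := fun i => s * (Real.log (b i) - Real.log (a i)))
    (fun i _ => mul_nonneg (hw i) (ha i).le) h1 (fun _ _ => Set.mem_univ _)
  simp only [smul_eq_mul, ← hterm] at hjensen
  rw [Real.le_log_iff_exp_le ((Real.exp_pos _).trans_le hjensen)]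
  refine (Real.exp_le_exp.2 (le_of_eq ?_)).trans hjensen
  rw [neg_mul, Finset.sum_mul, ← Finset.sum_neg_distrib]
  exact Finset.sum_congr rfl fun i _ => by ring

section QuantumToClassical

variable {d : ℕ} {ρ σ : Matrix (Fin d) (Fin d) ℂ}

theorem qphi_eq_log_sum (hρ : ρ.IsHermitian) (hσ : σ.IsHermitian) (s : ℝ) :
    qphi ρ σ s = Real.log (∑ x, hρ.eigenOverlap hσ x * hρ.eigenvalues x.1 ^ (1 - s) *
      hσ.eigenvalues x.2 ^ s) := by
  rw [qphi, hρ.mpow_eq_cfc, hσ.mpow_eq_cfc, trace_cfc_mul_cfc, Complex.ofReal_re]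

theorem qRelEnt_eq_sum (hρ : ρ.IsHermitian) (hσ : σ.IsHermitian) :
    qRelEnt ρ σ = ∑ x, hρ.eigenOverlap hσ x * hρ.eigenvalues x.1 *
      (Real.log (hρ.eigenvalues x.1) - Real.log (hσ.eigenvalues x.2)) := by
  have hρρ : ρ * mlog ρ = cfc (fun x => x * Real.log x) ρ * cfc (fun _ => (1 : ℝ)) σ := by
    rw [mlog_eq_cfc hρ,
      cfc_mul (fun x : ℝ => x) Real.log ρ (hg := ρ.finite_real_spectrum.continuousOn _),
      cfc_id' ℝ ρ hρ.isSelfAdjoint, cfc_const_one ℝ σ hσ.isSelfAdjoint, Matrix.mul_one]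
  have hρσ : ρ * mlog σ = cfc (fun x : ℝ => x) ρ * cfc Real.log σ := by
    rw [mlog_eq_cfc hσ, cfc_id' ℝ ρ hρ.isSelfAdjoint]
  rw [qRelEnt, Matrix.mul_sub, Matrix.trace_sub, hρρ, hρσ, hρ.trace_cfc_mul_cfc hσ,
    hρ.trace_cfc_mul_cfc hσ, ← Complex.ofReal_sub, Complex.ofReal_re, ← Finset.sum_sub_distrib]
  exact Finset.sum_congr rfl fun x _ => by ring

theorem qRelEnt_swap_eq_sum (hρ : ρ.IsHermitian) (hσ : σ.IsHermitian) :
    qRelEnt σ ρ = ∑ x, hρ.eigenOverlap hσ x * hσ.eigenvalues x.2 *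
      (Real.log (hσ.eigenvalues x.2) - Real.log (hρ.eigenvalues x.1)) := by
  have hσσ : σ * mlog σ = cfc (fun _ => (1 : ℝ)) ρ * cfc (fun x => x * Real.log x) σ := by
    rw [mlog_eq_cfc hσ,
      cfc_mul (fun x : ℝ => x) Real.log σ (hg := σ.finite_real_spectrum.continuousOn _),
      cfc_id' ℝ σ hσ.isSelfAdjoint, cfc_const_one ℝ ρ hρ.isSelfAdjoint, Matrix.one_mul]
  have hσρ : (σ * mlog ρ).trace = (cfc Real.log ρ * cfc (fun x : ℝ => x) σ).trace := by
    rw [mlog_eq_cfc hρ, cfc_id' ℝ σ hσ.isSelfAdjoint, Matrix.trace_mul_comm]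
  rw [qRelEnt, Matrix.mul_sub, Matrix.trace_sub, hσσ, hσρ, hρ.trace_cfc_mul_cfc hσ,
    hρ.trace_cfc_mul_cfc hσ, ← Complex.ofReal_sub, Complex.ofReal_re, ← Finset.sum_sub_distrib]
  exact Finset.sum_congr rfl fun x _ => by ring

theorem qphi_zero (hρ : ρ.IsHermitian) (hσ : σ.IsHermitian) (hρ1 : ρ.trace = 1) :
    qphi ρ σ 0 = 0 := by
  simp only [qphi_eq_log_sum hρ hσ, sub_zero, Real.rpow_one, Real.rpow_zero, mul_one,
    sum_eigenOverlap_mul_eigenvalues_left, hρ1, Complex.one_re, Real.log_one]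

theorem qphi_one (hρ : ρ.IsHermitian) (hσ : σ.IsHermitian) (hσ1 : σ.trace = 1) :
    qphi ρ σ 1 = 0 := by
  simp only [qphi_eq_log_sum hρ hσ, sub_self, Real.rpow_one, Real.rpow_zero, mul_one,
    sum_eigenOverlap_mul_eigenvalues_right, hσ1, Complex.one_re, Real.log_one]

theorem neg_qRelEnt_mul_le_qphi (hρ : ρ.PosDef) (hσ : σ.PosDef) (hρ1 : ρ.trace = 1) (s : ℝ) :
    -qRelEnt ρ σ * s ≤ qphi ρ σ s := by
  rw [qRelEnt_eq_sum hρ.1 hσ.1, qphi_eq_log_sum hρ.1 hσ.1]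
  refine neg_sum_mul_le_log_sum_rpow (eigenOverlap_nonneg _ _) (fun _ => hρ.eigenvalues_pos _)
    (fun _ => hσ.eigenvalues_pos _) ?_ s
  rw [sum_eigenOverlap_mul_eigenvalues_left, hρ1, Complex.one_re]

theorem qRelEnt_swap_mul_sub_one_le_qphi (hρ : ρ.PosDef) (hσ : σ.PosDef) (hσ1 : σ.trace = 1)
    (s : ℝ) : qRelEnt σ ρ * (s - 1) ≤ qphi ρ σ s := by
  have h := neg_sum_mul_le_log_sum_rpow (eigenOverlap_nonneg hρ.1 hσ.1)
    (fun x => hσ.eigenvalues_pos x.2) (fun x => hρ.eigenvalues_pos x.1)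
    (by rw [sum_eigenOverlap_mul_eigenvalues_right, hσ1, Complex.one_re]) (1 - s)
  rw [qRelEnt_swap_eq_sum hρ.1 hσ.1, qphi_eq_log_sum hρ.1 hσ.1]
  convert h using 1
  · ring
  · simp only [sub_sub_cancel]
    exact congrArg Real.log (Finset.sum_congr rfl fun x _ => by ring)

end QuantumToClassical

theorem lipschitzOnWith_one_of_monotoneOn_of_antitoneOn_sub {f : ℝ → ℝ} {s : Set ℝ}
    (hf : MonotoneOn f s) (hg : AntitoneOn (fun x => f x - x) s) : LipschitzOnWith 1 f s := by
  refine LipschitzOnWith.of_dist_le_mul fun x hx y hy => ?_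
  rw [NNReal.coe_one, one_mul, Real.dist_eq, Real.dist_eq, abs_le]
  rcases le_total x y with hxy | hyx
  · have := hf hx hy hxy
    have := hg hx hy hxy
    constructor <;> linarith [abs_sub_comm x y, le_abs_self (y - x)]
  · have := hf hy hx hyx
    have := hg hy hx hyx
    constructor <;> linarith [le_abs_self (x - y)]

section LegendreTransform

variable {φ : ℝ → ℝ} {D D' a : ℝ}

theorem bddAbove_range_mul_sub (hA : ∀ s, -D * s ≤ φ s) (hB : ∀ s, D' * (s - 1) ≤ φ s)
    (ha : a ∈ Set.Icc (-D) D') : BddAbove (Set.range fun s => a * s - φ s) := by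
  refine ⟨max (a + D) a, Set.forall_mem_range.2 fun s => ?_⟩
  rcases le_total s 1 with hs | hs
  · have := mul_le_mul_of_nonneg_left hs (by linarith [ha.1] : 0 ≤ a + D)
    exact le_max_of_le_left (by nlinarith [hA s])
  · have := mul_le_mul_of_nonneg_left hs (by linarith [ha.2] : 0 ≤ D' - a)
    exact le_max_of_le_right (by nlinarith [hB s])

theorem ciSup_neg_mul_sub_eq_zero (h0 : φ 0 = 0) (hA : ∀ s, -D * s ≤ φ s) :
    ⨆ s, -D * s - φ s = 0 := by
  have hle : ∀ s, -D * s - φ s ≤ 0 := fun s => by linarith [hA s]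
  refine le_antisymm (ciSup_le hle) ?_
  simpa [h0] using le_ciSup ⟨0, Set.forall_mem_range.2 hle⟩ 0

theorem monotoneOn_ciSup_mul_sub (h0 : φ 0 = 0) (hA : ∀ s, -D * s ≤ φ s)
    (hB : ∀ s, D' * (s - 1) ≤ φ s) :
    MonotoneOn (fun a => ⨆ s, a * s - φ s) (Set.Icc (-D) D') := by
  intro a₁ ha₁ a₂ ha₂ h12
  have hbdd := bddAbove_range_mul_sub hA hB ha₂
  refine ciSup_le fun s => ?_
  rcases le_total s 0 with hs | hs
  · have := mul_nonpos_of_nonneg_of_nonpos (by linarith [ha₁.1] : 0 ≤ a₁ + D) hs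
    calc a₁ * s - φ s ≤ a₂ * 0 - φ 0 := by rw [h0]; nlinarith [hA s]
      _ ≤ _ := le_ciSup hbdd 0
  · calc a₁ * s - φ s ≤ a₂ * s - φ s := by gcongr
      _ ≤ _ := le_ciSup hbdd s

theorem ciSup_mul_sub_comp_add_one (hbdd : BddAbove (Set.range fun s => a * s - φ s)) :
    ⨆ s, a * s - φ (s + 1) = (⨆ s, a * s - φ s) - a := by
  rw [ciSup_sub hbdd, ← (Equiv.addRight (1 : ℝ)).iSup_comp (g := fun u => a * u - φ u - a)]
  exact iSup_congr fun s => by simp only [Equiv.coe_addRight]; ring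

theorem ciSup_mul_sub_comp_add_one_eq_neg (a : ℝ) :
    ⨆ s, a * s - φ (s + 1) = ⨆ t, -a * t - φ (1 - t) := by
  rw [← (Equiv.neg ℝ).iSup_comp]
  exact iSup_congr fun s => by simp only [Equiv.neg_apply]; ring_nf

end LegendreTransform

/-- Properties of `Ψ(a) = max_{s∈ℝ}(a·s − φ(s+1))`: it satisfies `Ψ(a) = Φ(a) − a` on
`[−D(ρ‖σ), D(σ‖ρ)]` where `Φ(a) = max_{s∈ℝ}(a·s − φ(s))`, is continuous and monotonically
decreasing on this interval, with `Ψ(−D(ρ‖σ)) = D(ρ‖σ)` and `Ψ(D(σ‖ρ)) = 0`. -/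
theorem Psi_properties {d : ℕ} (ρ σ : Matrix (Fin d) (Fin d) ℂ)
    (hρ : ρ.PosDef) (hρ1 : ρ.trace = 1)
    (hσ : σ.PosDef) (hσ1 : σ.trace = 1)
    (Φ Ψ : ℝ → ℝ)
    (hΦ : ∀ a, Φ a = ⨆ s : ℝ, (a * s - qphi ρ σ s))
    (hΨ : ∀ a, Ψ a = ⨆ s : ℝ, (a * s - qphi ρ σ (s + 1))) :
    (∀ a ∈ Set.Icc (-(qRelEnt ρ σ)) (qRelEnt σ ρ), Ψ a = Φ a - a)
      ∧ ContinuousOn Ψ (Set.Icc (-(qRelEnt ρ σ)) (qRelEnt σ ρ))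
      ∧ AntitoneOn Ψ (Set.Icc (-(qRelEnt ρ σ)) (qRelEnt σ ρ))
      ∧ Ψ (-(qRelEnt ρ σ)) = qRelEnt ρ σ
      ∧ Ψ (qRelEnt σ ρ) = 0 := by
  have h0 := qphi_zero hρ.1 hσ.1 hρ1
  have h1 := qphi_one hρ.1 hσ.1 hσ1
  have hA := neg_qRelEnt_mul_le_qphi hρ hσ hρ1
  have hB := qRelEnt_swap_mul_sub_one_le_qphi hρ hσ hσ1
  have hshift : ∀ a ∈ Set.Icc (-qRelEnt ρ σ) (qRelEnt σ ρ), Ψ a = Φ a - a :=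
    fun a ha => by rw [hΨ, hΦ, ciSup_mul_sub_comp_add_one (bddAbove_range_mul_sub hA hB ha)]
  have hΦ_mono : MonotoneOn Φ (Set.Icc (-qRelEnt ρ σ) (qRelEnt σ ρ)) := by
    simpa only [← hΦ] using monotoneOn_ciSup_mul_sub h0 hA hB
  -- `Ψ a` is the supremum defining `Φ`, taken for the reflected function `t ↦ φ (1 - t)` at `-a`;
  -- the reflected function satisfies the same bounds with the two relative entropies exchanged.
  have h1' : qphi ρ σ (1 - 0) = 0 := by rwa [sub_zero]
  have hA' : ∀ t, -qRelEnt σ ρ * t ≤ qphi ρ σ (1 - t) := fun t => by linarith [hB (1 - t)]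
  have hB' : ∀ t, qRelEnt ρ σ * (t - 1) ≤ qphi ρ σ (1 - t) := fun t => by linarith [hA (1 - t)]
  have hΨ_anti : AntitoneOn Ψ (Set.Icc (-qRelEnt ρ σ) (qRelEnt σ ρ)) := fun a ha b hb hab => by
    simp only [hΨ, ciSup_mul_sub_comp_add_one_eq_neg]
    exact monotoneOn_ciSup_mul_sub (φ := fun t => qphi ρ σ (1 - t)) h1' hA' hB'
      ⟨neg_le_neg hb.2, neg_le.mpr hb.1⟩ ⟨neg_le_neg ha.2, neg_le.mpr ha.1⟩
      (neg_le_neg hab)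
  have hle : -qRelEnt ρ σ ≤ qRelEnt σ ρ := by linarith [hA 1, hB 0]
  refine ⟨hshift, ?_, hΨ_anti, ?_, ?_⟩
  · exact ((lipschitzOnWith_one_of_monotoneOn_of_antitoneOn_sub hΦ_mono
      (hΨ_anti.congr fun a ha => hshift a ha)).continuousOn.sub continuousOn_id).congr
      fun a ha => hshift a ha
  · rw [hshift _ ⟨le_rfl, hle⟩, hΦ, ciSup_neg_mul_sub_eq_zero h0 hA, zero_sub, neg_neg]
  · rw [hΨ, ciSup_mul_sub_comp_add_one_eq_neg, ciSup_neg_mul_sub_eq_zero h1' hA']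
end
end

section
/- Let ρ and σ be faithful density operators on a finite-dimensional complex Hilbert space, φ(s) := log Tr[ρ^{1−s}σ^{s}], Φ(a) := max_{0≤s≤1}(a·s − φ(s)), Ψ(a) := Φ(a) − a, and b(r) := max_{0≤s<1} (−s·r − φ(s))/(1−s). Then for a ∈ [−D(ρ‖σ), D(σ‖ρ)] and r ∈ [0, D(ρ‖σ)], the relation r = Ψ(a) holds if and only if b(r) = Φ(a) = a + Ψ(a). -/
open scoped Matrix ComplexOrder
open Filter

noncomputable section

open Topology


lemma main_scalar {D1 D2 : ℝ} (φ : ℝ → ℝ) (hφ0 : φ 0 = 0) (hφ1 : φ 1 = 0)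
    (hcont : Continuous φ)
    (hd0 : HasDerivAt φ (-D1) 0) (hd1 : HasDerivAt φ D2 1)
    (hJ1 : ∀ s : ℝ, -(s * D1) ≤ φ s)
    (hJ2 : ∀ s : ℝ, -((1 - s) * D2) ≤ φ s)
    (Φ Ψ b : ℝ → ℝ)
    (hΦ : ∀ a, Φ a = ⨆ s : Set.Icc (0 : ℝ) 1, (a * (s : ℝ) - φ (s : ℝ)))
    (hΨ : ∀ a, Ψ a = Φ a - a)
    (hb : ∀ r, b r = ⨆ s : Set.Ico (0 : ℝ) 1, (-(s : ℝ) * r - φ (s : ℝ)) / (1 - (s : ℝ)))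
    (a : ℝ) (ha : a ∈ Set.Icc (-D1) D2) (r : ℝ) (hr : r ∈ Set.Icc 0 D1) :
    r = Ψ a ↔ (b r = Φ a ∧ Φ a = a + Ψ a) := by
  obtain ⟨ha1, ha2⟩ := ha
  obtain ⟨hr1, hr2⟩ := hr
  have hD1 : 0 ≤ D1 := hr1.trans hr2
  haveI : Nonempty (Set.Icc (0 : ℝ) 1) := ⟨⟨0, by norm_num⟩⟩
  haveI : Nonempty (Set.Ico (0 : ℝ) 1) := ⟨⟨0, by norm_num⟩⟩
  -- boundedness of the Φ-range
  have bddΦ : BddAbove (Set.range fun s : Set.Icc (0 : ℝ) 1 => a * (s : ℝ) - φ (s : ℝ)) := by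
    refine ⟨|a| + D1, ?_⟩
    rintro x ⟨⟨s, hs0, hs1⟩, rfl⟩
    have h1 : a * s ≤ |a| := by
      calc a * s ≤ |a * s| := le_abs_self _
      _ = |a| * |s| := abs_mul a s
      _ ≤ |a| * 1 := by
            have : |s| ≤ 1 := by rw [abs_of_nonneg hs0]; exact hs1
            nlinarith [abs_nonneg a]
      _ = |a| := mul_one _
    have h2 : -(φ s) ≤ D1 := by nlinarith [hJ1 s]
    simp only
    linarith
  have Φle : ∀ s : Set.Icc (0 : ℝ) 1, a * (s : ℝ) - φ (s : ℝ) ≤ Φ a := by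
    intro s; rw [hΦ]; exact le_ciSup bddΦ s
  -- boundedness of the b-range
  have btermle : ∀ r' : ℝ, 0 ≤ r' → ∀ s : Set.Ico (0 : ℝ) 1,
      (-(s : ℝ) * r' - φ (s : ℝ)) / (1 - (s : ℝ)) ≤ D2 := by
    rintro r' hr' ⟨s, hs0, hs1⟩
    have hs' : (0 : ℝ) < 1 - s := by linarith
    rw [div_le_iff₀ hs']
    have := hJ2 s
    nlinarith
  have bddb : ∀ r' : ℝ, 0 ≤ r' →
      BddAbove (Set.range fun s : Set.Ico (0 : ℝ) 1 => (-(s : ℝ) * r' - φ (s : ℝ)) / (1 - (s : ℝ))) := by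
    intro r' hr'
    exact ⟨D2, by rintro x ⟨s, rfl⟩; exact btermle r' hr' s⟩
  have ble : ∀ r' : ℝ, 0 ≤ r' → ∀ s : Set.Ico (0 : ℝ) 1,
      (-(s : ℝ) * r' - φ (s : ℝ)) / (1 - (s : ℝ)) ≤ b r' := by
    intro r' hr' s; rw [hb]; exact le_ciSup (bddb r' hr') s
  have bub : ∀ r' : ℝ, ∀ c : ℝ, (∀ s : Set.Ico (0 : ℝ) 1,
      (-(s : ℝ) * r' - φ (s : ℝ)) / (1 - (s : ℝ)) ≤ c) → b r' ≤ c := by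
    intro r' c h; rw [hb]; exact ciSup_le h
  -- maximum attained for Φ
  obtain ⟨s₀, hs₀, hmax⟩ := isCompact_Icc.exists_isMaxOn (Set.nonempty_Icc.mpr zero_le_one)
    ((continuous_const.mul continuous_id).sub hcont).continuousOn
    (f := fun s : ℝ => a * s - φ s)
  have hΦeq : Φ a = a * s₀ - φ s₀ := by
    refine le_antisymm ?_ (Φle ⟨s₀, hs₀⟩)
    rw [hΦ]; exact ciSup_le fun ⟨s, hs⟩ => hmax hs
  have hs₀0 := hs₀.1
  have hs₀1 := hs₀.2
  have ΦgeA : a ≤ Φ a := by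
    have := Φle ⟨1, by norm_num⟩
    simp only [hφ1] at this
    linarith
  have Ψnn : 0 ≤ Ψ a := by rw [hΨ]; linarith
  have ΨD1 : Ψ a ≤ D1 := by
    rw [hΨ, hΦeq]
    nlinarith [hJ1 s₀, mul_nonneg (by linarith : (0:ℝ) ≤ D1 + a) (by linarith : (0:ℝ) ≤ 1 - s₀)]
  -- b is antitone on [0, ∞)
  have bmono : ∀ r1 r2 : ℝ, 0 ≤ r1 → r1 ≤ r2 → b r2 ≤ b r1 := by
    intro r1 r2 h1 h12
    refine bub r2 (b r1) fun ⟨s, hs0, hs1⟩ => ?_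
    refine le_trans ?_ (ble r1 h1 ⟨s, hs0, hs1⟩)
    have hs' : (0 : ℝ) < 1 - s := by linarith
    rw [div_eq_mul_inv, div_eq_mul_inv]
    exact mul_le_mul_of_nonneg_right (by nlinarith) (inv_nonneg.mpr hs'.le)
  have bD1 : b D1 = 0 := by
    refine le_antisymm (bub D1 0 fun ⟨s, hs0, hs1⟩ => ?_) ?_
    · apply div_nonpos_of_nonpos_of_nonneg
      · nlinarith [hJ1 s]
      · linarith
    · have := ble D1 hD1 ⟨0, by norm_num⟩
      simpa [hφ0] using this
  -- b is positive strictly below D1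
  have bpos : ∀ r' : ℝ, 0 ≤ r' → r' < D1 → 0 < b r' := by
    intro r' h0 hlt
    have hslope := hasDerivAt_iff_tendsto_slope.mp hd0
    have hne : Set.Ioo (0:ℝ) 1 ⊆ {x | x ≠ 0} := fun x hx => ne_of_gt hx.1
    have hmono : 𝓝[Set.Ioo (0:ℝ) 1] 0 ≤ 𝓝[≠] (0:ℝ) := nhdsWithin_mono _ hne
    haveI : (𝓝[Set.Ioo (0:ℝ) 1] 0).NeBot := by
      rw [← mem_closure_iff_nhdsWithin_neBot, closure_Ioo one_ne_zero.symm]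
      exact ⟨le_refl 0, zero_le_one⟩
    have h2 : ∀ᶠ s in 𝓝[Set.Ioo (0:ℝ) 1] 0, slope φ 0 s < -r' :=
      (hslope.mono_left hmono).eventually_lt_const (by linarith)
    have h3 : ∀ᶠ s in 𝓝[Set.Ioo (0:ℝ) 1] 0, s ∈ Set.Ioo (0:ℝ) 1 := self_mem_nhdsWithin
    obtain ⟨s, hs1, hs2⟩ := (h2.and h3).exists
    obtain ⟨hsl, hsr⟩ := hs2
    have hslope_eq : slope φ 0 s = φ s / s := by
      rw [slope_def_field, hφ0]; ring_nf
    rw [hslope_eq] at hs1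
    have hφs : φ s < -r' * s := by
      rw [div_lt_iff₀ hsl] at hs1; linarith [hs1]
    have hterm : 0 < (-(s : ℝ) * r' - φ s) / (1 - s) := by
      apply div_pos ?_ (by linarith)
      nlinarith
    exact lt_of_lt_of_le hterm (ble r' h0 ⟨s, le_of_lt hsl, hsr⟩)
  -- strict antitonicity hence injectivity on [0, D1]
  have bstrict : ∀ r1 r2 : ℝ, 0 ≤ r1 → r1 < r2 → r2 ≤ D1 → b r2 < b r1 := by
    intro r1 r2 h1 h12 h2
    rcases eq_or_lt_of_le h2 with h2e | h2lt
    · rw [h2e, bD1]; exact bpos r1 h1 (h2e ▸ h12)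
    · by_contra hcon
      push_neg at hcon
      have heq : b r1 = b r2 := le_antisymm hcon (bmono r1 r2 h1 h12.le)
      have hcpos : 0 < b r2 := bpos r2 (h1.trans h12.le) h2lt
      set lam : ℝ := (D1 - r2) / (D1 - r1) with hlam
      have hd : (0:ℝ) < D1 - r1 := by linarith
      have hlam0 : 0 < lam := div_pos (by linarith) hd
      have hlam1 : lam < 1 := (div_lt_one hd).mpr (by linarith)
      have hcomb : lam * r1 + (1 - lam) * D1 = r2 := by
        have hne : D1 - r1 ≠ 0 := hd.ne'
        have : lam * (D1 - r1) = D1 - r2 := by rw [hlam]; exact div_mul_cancel₀ _ hne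
        linear_combination -this
      have hkey : b r2 ≤ lam * b r1 + (1 - lam) * b D1 := by
        refine bub r2 _ fun ⟨s, hs0, hs1⟩ => ?_
        have hs' : (0 : ℝ) < 1 - s := by linarith
        have e1 := ble r1 h1 ⟨s, hs0, hs1⟩
        have e2 := ble D1 hD1 ⟨s, hs0, hs1⟩
        have haff : (-(s : ℝ) * r2 - φ s) / (1 - s)
            = lam * ((-(s : ℝ) * r1 - φ s) / (1 - s)) + (1 - lam) * ((-(s : ℝ) * D1 - φ s) / (1 - s)) := by
          rw [← hcomb]; field_simp; ring
        rw [haff]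
        have := mul_le_mul_of_nonneg_left e1 hlam0.le
        have := mul_le_mul_of_nonneg_left e2 (by linarith : (0:ℝ) ≤ 1 - lam)
        linarith
      rw [bD1, heq] at hkey
      nlinarith
  have binj : ∀ r1 r2 : ℝ, r1 ∈ Set.Icc 0 D1 → r2 ∈ Set.Icc 0 D1 → b r1 = b r2 → r1 = r2 := by
    intro r1 r2 hm1 hm2 hbeq
    rcases lt_trichotomy r1 r2 with h | h | h
    · exact absurd hbeq (ne_of_gt (bstrict r1 r2 hm1.1 h hm2.2))
    · exact h
    · exact absurd hbeq.symm (ne_of_gt (bstrict r2 r1 hm2.1 h hm1.2))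
  -- the core identity b (Ψ a) = Φ a
  have core : b (Ψ a) = Φ a := by
    refine le_antisymm (bub (Ψ a) (Φ a) fun ⟨s, hs0, hs1⟩ => ?_) ?_
    · have hs' : (0 : ℝ) < 1 - s := by linarith
      rw [div_le_iff₀ hs']
      have := Φle ⟨s, hs0, hs1.le⟩
      rw [hΨ]
      simp only at this ⊢
      nlinarith
    · rcases eq_or_lt_of_le hs₀1 with h1 | hlt
      · -- maximum at s = 1 : Φ a = a, Ψ a = 0, use the derivative at 1
        have hΦa : Φ a = a := by rw [hΦeq, h1, hφ1]; ring
        have hΨ0 : Ψ a = 0 := by rw [hΨ, hΦa]; ring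
        rw [hΨ0, hΦa]
        have hslope := hasDerivAt_iff_tendsto_slope.mp hd1
        have hne : Set.Ico (0:ℝ) 1 ⊆ {x | x ≠ 1} := fun x hx => ne_of_lt hx.2
        have hmono : 𝓝[Set.Ico (0:ℝ) 1] 1 ≤ 𝓝[≠] (1:ℝ) := nhdsWithin_mono _ hne
        haveI : (𝓝[Set.Ico (0:ℝ) 1] 1).NeBot := by
          rw [← mem_closure_iff_nhdsWithin_neBot, closure_Ico one_ne_zero.symm]
          exact ⟨zero_le_one, le_refl 1⟩
        have hD2b : D2 ≤ b 0 := by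
          refine le_of_tendsto (hslope.mono_left hmono) ?_
          filter_upwards [self_mem_nhdsWithin] with s hs
          have hs1' : s < 1 := hs.2
          have : slope φ 1 s = (-(s : ℝ) * 0 - φ s) / (1 - s) := by
            have hne1 : s - 1 ≠ 0 := by linarith
            have hne2 : (1:ℝ) - s ≠ 0 := by linarith
            rw [slope_def_field, hφ1]
            field_simp
            ring
          rw [this]
          exact ble 0 le_rfl ⟨s, hs.1, hs1'⟩
        linarith
      · -- maximum at s₀ < 1
        have hterm : (-(s₀ : ℝ) * Ψ a - φ s₀) / (1 - s₀) = Φ a := by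
          have hs' : (1:ℝ) - s₀ ≠ 0 := by linarith
          rw [hΨ, div_eq_iff hs']
          nlinarith [hΦeq]
        calc Φ a = (-(s₀ : ℝ) * Ψ a - φ s₀) / (1 - s₀) := hterm.symm
        _ ≤ b (Ψ a) := ble (Ψ a) Ψnn ⟨s₀, hs₀0, hlt⟩
  constructor
  · intro h
    exact ⟨by rw [h, core], by rw [hΨ]; ring⟩
  · rintro ⟨h1, -⟩
    exact binj r (Ψ a) ⟨hr1, hr2⟩ ⟨Ψnn, ΨD1⟩ (by rw [h1, core])


lemma trace_conj_pair {d : ℕ} (U V : Matrix.unitaryGroup (Fin d) ℂ) (D E : Fin d → ℝ) :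
    (((U : Matrix (Fin d) (Fin d) ℂ) * Matrix.diagonal (fun i => (D i : ℂ)) *
        star (U : Matrix (Fin d) (Fin d) ℂ)) *
     ((V : Matrix (Fin d) (Fin d) ℂ) * Matrix.diagonal (fun j => (E j : ℂ)) *
        star (V : Matrix (Fin d) (Fin d) ℂ))).trace
    = ((∑ i, ∑ j, D i * E j *
        Complex.normSq ((star (U : Matrix (Fin d) (Fin d) ℂ) * (V : Matrix (Fin d) (Fin d) ℂ)) i j) : ℝ) : ℂ) := by
  set Um : Matrix (Fin d) (Fin d) ℂ := (U : Matrix (Fin d) (Fin d) ℂ) with hUm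
  set Vm : Matrix (Fin d) (Fin d) ℂ := (V : Matrix (Fin d) (Fin d) ℂ) with hVm
  set M : Matrix (Fin d) (Fin d) ℂ := star Um * Vm with hM
  have h1 : (Um * Matrix.diagonal (fun i => (D i : ℂ)) * star Um) *
      (Vm * Matrix.diagonal (fun j => (E j : ℂ)) * star Vm)
      = Um * (Matrix.diagonal (fun i => (D i : ℂ)) * star Um *
          (Vm * Matrix.diagonal (fun j => (E j : ℂ)) * star Vm)) := by
    simp only [Matrix.mul_assoc]
  rw [h1, Matrix.trace_mul_comm]
  have h2 : Matrix.diagonal (fun i => (D i : ℂ)) * star Um *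
      (Vm * Matrix.diagonal (fun j => (E j : ℂ)) * star Vm) * Um
      = Matrix.diagonal (fun i => (D i : ℂ)) * (M * (Matrix.diagonal (fun j => (E j : ℂ)) * star M)) := by
    rw [hM, Matrix.star_mul, star_star]
    simp only [Matrix.mul_assoc]
  rw [h2]
  rw [Matrix.trace]
  have h3 : ∀ i, (Matrix.diagonal (fun i => (D i : ℂ)) *
      (M * (Matrix.diagonal (fun j => (E j : ℂ)) * star M))).diag i
      = ∑ j, (D i : ℂ) * (E j : ℂ) * (Complex.normSq (M i j) : ℂ) := by
    intro i
    simp only [Matrix.diag, Matrix.mul_apply, Matrix.diagonal_apply, Matrix.star_apply,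
      Finset.mul_sum, ite_mul, mul_ite, mul_zero, zero_mul, Finset.sum_ite_eq,
      Finset.sum_ite_eq', Finset.mem_univ, if_true]
    have hsw : ∀ x : Fin d, (∑ x1 : Fin d, if i = x then (D i : ℂ) * (M x x1 * ((E x1 : ℂ) * star (M i x1))) else 0)
        = if i = x then ∑ x1 : Fin d, (D i : ℂ) * (M x x1 * ((E x1 : ℂ) * star (M i x1))) else 0 := by
      intro x; split <;> simp
    simp only [hsw, Finset.sum_ite_eq, Finset.mem_univ, if_true]
    refine Finset.sum_congr rfl fun j _ => ?_
    have hc : M i j * star (M i j) = (Complex.normSq (M i j) : ℂ) := Complex.mul_conj (M i j)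
    calc (D i : ℂ) * (M i j * ((E j : ℂ) * star (M i j)))
        = (D i : ℂ) * (E j : ℂ) * (M i j * star (M i j)) := by ring
    _ = _ := by rw [hc]
  simp only [h3]
  norm_cast


/-- For `a ∈ [−D(ρ‖σ), D(σ‖ρ)]` and `r ∈ [0, D(ρ‖σ)]`, the relation `r = Ψ(a)` holds
if and only if `b(r) = Φ(a) = a + Ψ(a)`, where `Φ(a) = max_{0≤s≤1}(a·s − φ(s))`,
`Ψ(a) = Φ(a) − a` and `b(r) = max_{0≤s<1}(−s·r − φ(s))/(1−s)`. -/
theorem r_eq_Psi_iff_b_eq_Phi {d : ℕ} (ρ σ : Matrix (Fin d) (Fin d) ℂ)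
    (hρ : ρ.PosDef) (hρ1 : ρ.trace = 1)
    (hσ : σ.PosDef) (hσ1 : σ.trace = 1)
    (Φ Ψ b : ℝ → ℝ)
    (hΦ : ∀ a, Φ a = ⨆ s : Set.Icc (0 : ℝ) 1, (a * (s : ℝ) - qphi ρ σ (s : ℝ)))
    (hΨ : ∀ a, Ψ a = Φ a - a)
    (hb : ∀ r, b r = ⨆ s : Set.Ico (0 : ℝ) 1, (-(s : ℝ) * r - qphi ρ σ (s : ℝ)) / (1 - (s : ℝ)))
    (a : ℝ) (ha : a ∈ Set.Icc (-(qRelEnt ρ σ)) (qRelEnt σ ρ))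
    (r : ℝ) (hr : r ∈ Set.Icc 0 (qRelEnt ρ σ)) :
    r = Ψ a ↔ (b r = Φ a ∧ Φ a = a + Ψ a) := by
  classical
  have hρH : ρ.IsHermitian := hρ.1
  have hσH : σ.IsHermitian := hσ.1
  set U := hρH.eigenvectorUnitary with hU
  set V := hσH.eigenvectorUnitary with hV
  set p := hρH.eigenvalues with hpdef
  set q := hσH.eigenvalues with hqdef
  set M : Matrix (Fin d) (Fin d) ℂ :=
    star (U : Matrix (Fin d) (Fin d) ℂ) * (V : Matrix (Fin d) (Fin d) ℂ) with hM
  set w : Fin d → Fin d → ℝ := fun i j => Complex.normSq (M i j) with hw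
  have hppos : ∀ i, 0 < p i := hρ.eigenvalues_pos
  have hqpos : ∀ j, 0 < q j := hσ.eigenvalues_pos
  have hwnn : ∀ i j, 0 ≤ w i j := fun i j => Complex.normSq_nonneg _
  have hMmem : M ∈ Matrix.unitaryGroup (Fin d) ℂ := mul_mem (Unitary.star_mem U.2) V.2
  have hMM : M * star M = 1 := Matrix.mem_unitaryGroup_iff.mp hMmem
  have hMM' : star M * M = 1 := Matrix.mem_unitaryGroup_iff'.mp hMmem
  -- row and column sums of w
  have hrow : ∀ i, ∑ j, w i j = 1 := by
    intro i
    have h1 : (M * star M) i i = 1 := by rw [hMM]; simp [Matrix.one_apply]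
    rw [Matrix.mul_apply] at h1
    have h2 : ∀ j, M i j * star M j i = ((w i j : ℝ) : ℂ) := by
      intro j; rw [Matrix.star_apply]; exact Complex.mul_conj _
    rw [Finset.sum_congr rfl fun j _ => h2 j] at h1
    exact_mod_cast h1
  have hcol : ∀ j, ∑ i, w i j = 1 := by
    intro j
    have h1 : (star M * M) j j = 1 := by rw [hMM']; simp [Matrix.one_apply]
    rw [Matrix.mul_apply] at h1
    have h2 : ∀ i, star M j i * M i j = ((w i j : ℝ) : ℂ) := by
      intro i; rw [Matrix.star_apply, mul_comm]; exact Complex.mul_conj _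
    rw [Finset.sum_congr rfl fun i _ => h2 i] at h1
    exact_mod_cast h1
  -- spectral decompositions
  have hρspec : ρ = (U : Matrix (Fin d) (Fin d) ℂ) * Matrix.diagonal (fun i => ((p i : ℝ) : ℂ)) *
      star (U : Matrix (Fin d) (Fin d) ℂ) := hρH.spectral_theorem
  have hσspec : σ = (V : Matrix (Fin d) (Fin d) ℂ) * Matrix.diagonal (fun j => ((q j : ℝ) : ℂ)) *
      star (V : Matrix (Fin d) (Fin d) ℂ) := hσH.spectral_theorem
  -- eigenvalue sums
  have htraceU : ∀ (W : Matrix.unitaryGroup (Fin d) ℂ) (D : Fin d → ℝ),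
      (((W : Matrix (Fin d) (Fin d) ℂ) * Matrix.diagonal (fun i => ((D i : ℝ) : ℂ)) *
        star (W : Matrix (Fin d) (Fin d) ℂ)).trace) = ((∑ i, D i : ℝ) : ℂ) := by
    intro W D
    rw [Matrix.trace_mul_cycle]
    rw [show star (W : Matrix (Fin d) (Fin d) ℂ) * (W : Matrix (Fin d) (Fin d) ℂ) *
        Matrix.diagonal (fun i => ((D i : ℝ) : ℂ)) = Matrix.diagonal (fun i => ((D i : ℝ) : ℂ)) by
      rw [Matrix.mem_unitaryGroup_iff'.mp W.2, one_mul]]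
    rw [Matrix.trace_diagonal]
    norm_cast
  have hsum_p : ∑ i, p i = 1 := by
    have h1 : ρ.trace = ((∑ i, p i : ℝ) : ℂ) := by conv_lhs => rw [hρspec]; rw [htraceU U p]
    rw [hρ1] at h1
    exact_mod_cast h1.symm
  have hsum_q : ∑ j, q j = 1 := by
    have h1 : σ.trace = ((∑ j, q j : ℝ) : ℂ) := by conv_lhs => rw [hσspec]; rw [htraceU V q]
    rw [hσ1] at h1
    exact_mod_cast h1.symm
  -- scalar data
  set c : Fin d × Fin d → ℝ := fun k => p k.1 * w k.1 k.2 with hc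
  set θ : Fin d × Fin d → ℝ := fun k => Real.log (q k.2) - Real.log (p k.1) with hθ
  set f : ℝ → ℝ := fun s => ∑ k : Fin d × Fin d, c k * Real.exp (s * θ k) with hf
  have hcnn : ∀ k, 0 ≤ c k := fun k => mul_nonneg (hppos k.1).le (hwnn _ _)
  -- trace formula for mpow products
  have htr : ∀ s : ℝ, ((mpow ρ (1 - s)) * (mpow σ s)).trace
      = ((∑ i, ∑ j, p i ^ (1 - s) * q j ^ s * w i j : ℝ) : ℂ) := by
    intro s
    rw [mpow, mpow, dif_pos hρH, dif_pos hσH]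
    exact trace_conj_pair U V (fun i => p i ^ (1 - s)) (fun j => q j ^ s)
  have hterm : ∀ (s : ℝ) i j, p i ^ (1 - s) * q j ^ s * w i j
      = c (i, j) * Real.exp (s * θ (i, j)) := by
    intro s i j
    rw [Real.rpow_def_of_pos (hppos i), Real.rpow_def_of_pos (hqpos j)]
    simp only [hc, hθ]
    rw [← Real.exp_add,
      show Real.log (p i) * (1 - s) + Real.log (q j) * s
        = Real.log (p i) + s * (Real.log (q j) - Real.log (p i)) by ring,
      Real.exp_add, Real.exp_log (hppos i)]
    ring
  have hfs : ∀ s : ℝ, ((mpow ρ (1 - s)) * (mpow σ s)).trace = ((f s : ℝ) : ℂ) := by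
    intro s
    rw [htr s]
    have heq : (∑ i, ∑ j, p i ^ (1 - s) * q j ^ s * w i j) = f s := by
      simp only [hf]
      rw [Fintype.sum_prod_type]
      exact Finset.sum_congr rfl fun i _ => Finset.sum_congr rfl fun j _ => hterm s i j
    rw [heq]
  have hφf : ∀ s : ℝ, qphi ρ σ s = Real.log (f s) := by
    intro s
    rw [qphi, hfs s, Complex.ofReal_re]
  -- Jensen helper
  have jensen : ∀ (u x : Fin d × Fin d → ℝ), (∀ k, 0 ≤ u k) → (∑ k, u k) = 1 →
      Real.exp (∑ k, u k * x k) ≤ ∑ k, u k * Real.exp (x k) := by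
    intro u x hu h1
    have := convexOn_exp.map_sum_le (t := Finset.univ) (w := u) (p := x)
      (fun k _ => hu k) h1 (fun k _ => Set.mem_univ _)
    simpa [smul_eq_mul] using this
  have hsum_c : ∑ k : Fin d × Fin d, c k = 1 := by
    rw [Fintype.sum_prod_type]
    calc ∑ i, ∑ j, c (i, j) = ∑ i, p i * ∑ j, w i j := by
          refine Finset.sum_congr rfl fun i _ => ?_
          rw [Finset.mul_sum]
    _ = ∑ i, p i := by simp [hrow]
    _ = 1 := hsum_p
  have hceθ : ∀ k : Fin d × Fin d, c k * Real.exp (θ k) = q k.2 * w k.1 k.2 := by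
    intro k
    have hexp : Real.exp (θ k) = q k.2 / p k.1 := by
      rw [hθ]
      simp only
      rw [Real.exp_sub, Real.exp_log (hqpos _), Real.exp_log (hppos _)]
    rw [hexp, hc]
    simp only
    have hpne : p k.1 ≠ 0 := (hppos k.1).ne'
    field_simp
  have hsum_c' : ∑ k : Fin d × Fin d, c k * Real.exp (θ k) = 1 := by
    rw [Finset.sum_congr rfl fun k _ => hceθ k, Fintype.sum_prod_type, Finset.sum_comm]
    calc ∑ j, ∑ i, q j * w i j = ∑ j, q j * ∑ i, w i j := by
          refine Finset.sum_congr rfl fun j _ => ?_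
          rw [Finset.mul_sum]
    _ = ∑ j, q j := by simp [hcol]
    _ = 1 := hsum_q
  -- relative entropy identities
  have hL1 : (ρ * mlog ρ).trace = ((∑ i, p i * Real.log (p i) : ℝ) : ℂ) := by
    have estep : (ρ * mlog ρ).trace
        = ((((U : Matrix (Fin d) (Fin d) ℂ)) * Matrix.diagonal (fun i => ((p i : ℝ) : ℂ)) * star ((U : Matrix (Fin d) (Fin d) ℂ))) *
           (((U : Matrix (Fin d) (Fin d) ℂ)) * Matrix.diagonal (fun i => ((Real.log (p i) : ℝ) : ℂ)) * star ((U : Matrix (Fin d) (Fin d) ℂ)))).trace := by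
      rw [mlog, dif_pos hρH, ← hρspec]
    rw [estep]
    refine (trace_conj_pair U U p (fun i => Real.log (p i))).trans ?_
    rw [Complex.ofReal_inj]
    have hUU : star (U : Matrix (Fin d) (Fin d) ℂ) * (U : Matrix (Fin d) (Fin d) ℂ) = 1 :=
      Matrix.mem_unitaryGroup_iff'.mp U.2
    rw [hUU]
    simp [Matrix.one_apply, apply_ite Complex.normSq, mul_ite, Finset.sum_ite_eq',
      Finset.sum_ite_eq]
  have hL2 : (ρ * mlog σ).trace = ((∑ i, ∑ j, p i * Real.log (q j) * w i j : ℝ) : ℂ) := by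
    have estep : (ρ * mlog σ).trace
        = ((((U : Matrix (Fin d) (Fin d) ℂ)) * Matrix.diagonal (fun i => ((p i : ℝ) : ℂ)) * star ((U : Matrix (Fin d) (Fin d) ℂ))) *
           (((V : Matrix (Fin d) (Fin d) ℂ)) * Matrix.diagonal (fun j => ((Real.log (q j) : ℝ) : ℂ)) * star ((V : Matrix (Fin d) (Fin d) ℂ)))).trace := by
      rw [mlog, dif_pos hσH, ← hρspec]
    rw [estep]
    exact trace_conj_pair U V p (fun j => Real.log (q j))
  have hL3 : (σ * mlog σ).trace = ((∑ j, q j * Real.log (q j) : ℝ) : ℂ) := by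
    have estep : (σ * mlog σ).trace
        = ((((V : Matrix (Fin d) (Fin d) ℂ)) * Matrix.diagonal (fun i => ((q i : ℝ) : ℂ)) * star ((V : Matrix (Fin d) (Fin d) ℂ))) *
           (((V : Matrix (Fin d) (Fin d) ℂ)) * Matrix.diagonal (fun j => ((Real.log (q j) : ℝ) : ℂ)) * star ((V : Matrix (Fin d) (Fin d) ℂ)))).trace := by
      rw [mlog, dif_pos hσH, ← hσspec]
    rw [estep]
    refine (trace_conj_pair V V q (fun j => Real.log (q j))).trans ?_
    rw [Complex.ofReal_inj]
    have hVV : star (V : Matrix (Fin d) (Fin d) ℂ) * (V : Matrix (Fin d) (Fin d) ℂ) = 1 :=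
      Matrix.mem_unitaryGroup_iff'.mp V.2
    rw [hVV]
    simp [Matrix.one_apply, apply_ite Complex.normSq, mul_ite, Finset.sum_ite_eq',
      Finset.sum_ite_eq]
  have hL4 : (σ * mlog ρ).trace = ((∑ i, ∑ j, q i * Real.log (p j) * w j i : ℝ) : ℂ) := by
    have estep : (σ * mlog ρ).trace
        = ((((V : Matrix (Fin d) (Fin d) ℂ)) * Matrix.diagonal (fun i => ((q i : ℝ) : ℂ)) * star ((V : Matrix (Fin d) (Fin d) ℂ))) *
           (((U : Matrix (Fin d) (Fin d) ℂ)) * Matrix.diagonal (fun j => ((Real.log (p j) : ℝ) : ℂ)) * star ((U : Matrix (Fin d) (Fin d) ℂ)))).trace := by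
      rw [mlog, dif_pos hρH, ← hσspec]
    rw [estep]
    refine (trace_conj_pair V U q (fun j => Real.log (p j))).trans ?_
    rw [Complex.ofReal_inj]
    refine Finset.sum_congr rfl fun i _ => Finset.sum_congr rfl fun j _ => ?_
    congr 1
    have hent : (star (V : Matrix (Fin d) (Fin d) ℂ) * (U : Matrix (Fin d) (Fin d) ℂ)) i j
        = star (M j i) := by
      conv_rhs => rw [← Matrix.star_apply, hM, Matrix.star_mul, star_star]
    rw [hent, hw]
    simp only
    exact Complex.normSq_conj _
  have hScth : ∑ k : Fin d × Fin d, c k * θ k = -(qRelEnt ρ σ) := by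
    rw [qRelEnt, Matrix.mul_sub, Matrix.trace_sub, Complex.sub_re, hL1, hL2,
      Complex.ofReal_re, Complex.ofReal_re]
    rw [Fintype.sum_prod_type]
    have hd1 : ∑ i, p i * Real.log (p i) = ∑ i, ∑ j, p i * Real.log (p i) * w i j := by
      refine Finset.sum_congr rfl fun i _ => ?_
      rw [show ∑ j, p i * Real.log (p i) * w i j = p i * Real.log (p i) * ∑ j, w i j by
        rw [Finset.mul_sum], hrow i, mul_one]
    rw [neg_sub, hd1, ← Finset.sum_sub_distrib]
    refine Finset.sum_congr rfl fun i _ => ?_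
    rw [← Finset.sum_sub_distrib]
    refine Finset.sum_congr rfl fun j _ => ?_
    simp only [hc, hθ]
    ring
  have hScth2 : ∑ k : Fin d × Fin d, (c k * Real.exp (θ k)) * θ k = qRelEnt σ ρ := by
    rw [qRelEnt, Matrix.mul_sub, Matrix.trace_sub, Complex.sub_re, hL3, hL4,
      Complex.ofReal_re, Complex.ofReal_re]
    have he1 : ∑ j, q j * Real.log (q j) = ∑ i, ∑ j, q j * Real.log (q j) * w i j := by
      calc ∑ j, q j * Real.log (q j) = ∑ j, ∑ i, q j * Real.log (q j) * w i j := by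
            refine Finset.sum_congr rfl fun j _ => ?_
            rw [show ∑ i, q j * Real.log (q j) * w i j = q j * Real.log (q j) * ∑ i, w i j by
              rw [Finset.mul_sum], hcol j, mul_one]
      _ = ∑ i, ∑ j, q j * Real.log (q j) * w i j := Finset.sum_comm
    have he2 : (∑ i, ∑ j, q i * Real.log (p j) * w j i)
        = ∑ i, ∑ j, q j * Real.log (p i) * w i j := Finset.sum_comm
    rw [he1, he2, ← Finset.sum_sub_distrib]
    have hrepl : ∑ k : Fin d × Fin d, (c k * Real.exp (θ k)) * θ k
        = ∑ k : Fin d × Fin d, (q k.2 * w k.1 k.2) * θ k :=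
      Finset.sum_congr rfl fun k _ => by rw [hceθ k]
    rw [hrepl]
    rw [Fintype.sum_prod_type]
    refine Finset.sum_congr rfl fun i _ => ?_
    rw [← Finset.sum_sub_distrib]
    refine Finset.sum_congr rfl fun j _ => ?_
    simp only [hθ]
    ring
  -- derivative and positivity facts for f
  have hfd : ∀ s : ℝ, HasDerivAt f (∑ k : Fin d × Fin d, c k * (Real.exp (s * θ k) * θ k)) s := by
    intro s
    show HasDerivAt (fun s => ∑ k : Fin d × Fin d, c k * Real.exp (s * θ k)) _ s
    exact HasDerivAt.fun_sum fun k _ => ((hasDerivAt_mul_const (θ k)).exp).const_mul (c k)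
  have hfpos : ∀ s : ℝ, 0 < f s := by
    intro s
    have hj := jensen c (fun k => s * θ k) hcnn hsum_c
    calc (0:ℝ) < Real.exp (∑ k : Fin d × Fin d, c k * (s * θ k)) := Real.exp_pos _
    _ ≤ ∑ k : Fin d × Fin d, c k * Real.exp (s * θ k) := hj
    _ = f s := by simp only [hf]
  have hScsth : ∀ s : ℝ, ∑ k : Fin d × Fin d, c k * (s * θ k) = s * ∑ k : Fin d × Fin d, c k * θ k := by
    intro s
    rw [Finset.mul_sum]
    exact Finset.sum_congr rfl fun k _ => by ring
  have hf0 : f 0 = 1 := by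
    simp only [hf]
    simp only [zero_mul, Real.exp_zero, mul_one]
    exact hsum_c
  have hf1 : f 1 = 1 := by
    simp only [hf]
    simp only [one_mul]
    exact hsum_c'
  have hd0' : HasDerivAt (fun s => Real.log (f s)) (-(qRelEnt ρ σ)) 0 := by
    have h := (hfd 0).log (hfpos 0).ne'
    have hnum : ∑ k : Fin d × Fin d, c k * (Real.exp (0 * θ k) * θ k) = -(qRelEnt ρ σ) := by
      rw [← hScth]
      exact Finset.sum_congr rfl fun k _ => by rw [zero_mul, Real.exp_zero, one_mul]
    rw [hnum, hf0, div_one] at h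
    exact h
  have hd1' : HasDerivAt (fun s => Real.log (f s)) (qRelEnt σ ρ) 1 := by
    have h := (hfd 1).log (hfpos 1).ne'
    have hnum : ∑ k : Fin d × Fin d, c k * (Real.exp (1 * θ k) * θ k) = qRelEnt σ ρ := by
      rw [← hScth2]
      exact Finset.sum_congr rfl fun k _ => by rw [one_mul]; ring
    rw [hnum, hf1, div_one] at h
    exact h
  have hcontφ : Continuous (fun s => Real.log (f s)) :=
    continuous_iff_continuousAt.mpr fun s => ((hfd s).log (hfpos s).ne').continuousAt
  have hφ0 : Real.log (f 0) = 0 := by rw [hf0, Real.log_one]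
  have hφ1 : Real.log (f 1) = 0 := by rw [hf1, Real.log_one]
  have hJ1 : ∀ s : ℝ, -(s * qRelEnt ρ σ) ≤ Real.log (f s) := by
    intro s
    rw [Real.le_log_iff_exp_le (hfpos s)]
    have hj := jensen c (fun k => s * θ k) hcnn hsum_c
    rw [hScsth s, hScth] at hj
    rw [show -(s * qRelEnt ρ σ) = s * -(qRelEnt ρ σ) by ring]
    simp only [hf]
    exact hj
  have hJ2 : ∀ s : ℝ, -((1 - s) * qRelEnt σ ρ) ≤ Real.log (f s) := by
    intro s
    rw [Real.le_log_iff_exp_le (hfpos s)]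
    have hfalt : (∑ k : Fin d × Fin d, c k * Real.exp (s * θ k))
        = ∑ k : Fin d × Fin d, (c k * Real.exp (θ k)) * Real.exp ((s - 1) * θ k) := by
      refine Finset.sum_congr rfl fun k _ => ?_
      conv_rhs => rw [mul_assoc, ← Real.exp_add, show θ k + (s - 1) * θ k = s * θ k by ring]
    have hj := jensen (fun k => c k * Real.exp (θ k)) (fun k => (s - 1) * θ k)
      (fun k => mul_nonneg (hcnn k) (Real.exp_pos _).le) hsum_c'
    have h2 : ∑ k : Fin d × Fin d, (c k * Real.exp (θ k)) * ((s - 1) * θ k)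
        = (s - 1) * qRelEnt σ ρ := by
      rw [← hScth2, Finset.mul_sum]
      exact Finset.sum_congr rfl fun k _ => by ring
    rw [h2] at hj
    rw [show -((1 - s) * qRelEnt σ ρ) = (s - 1) * qRelEnt σ ρ by ring]
    calc Real.exp ((s - 1) * qRelEnt σ ρ)
        ≤ ∑ k : Fin d × Fin d, (c k * Real.exp (θ k)) * Real.exp ((s - 1) * θ k) := hj
    _ = ∑ k : Fin d × Fin d, c k * Real.exp (s * θ k) := hfalt.symm
    _ = f s := by simp only [hf]
  have hqphi_eq : qphi ρ σ = fun s => Real.log (f s) := funext hφf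
  simp only [hqphi_eq] at hΦ hb
  exact main_scalar (fun s => Real.log (f s)) hφ0 hφ1 hcontφ hd0' hd1' hJ1 hJ2
    Φ Ψ b hΦ hΨ hb a ha r hr
end
end
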